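/- arXiv:2301.07229 — 2 statements merged into one kernel-verified Lean document; each statement's English description precedes it below -/
import Mathlib

section
/- Let X₁ and X₂ be integrable real-valued random variables on a common probability space whose joint law ρ on ℝ × ℝ is absolutely continuous with respect to two-dimensional Lebesgue measure, with marginal densities f₁ and f₂, and suppose E[|X₁ − X₂|] < ∞. Define π₁(x) = condCDF(ρ) x x and π₂(x) = condCDF(ρ') x x where ρ' is the pushforward of ρ under the coordinate swap. Then E[|X₁ − X₂|] = ∫_ℝ x·[2 f₁(x)·π₁(x) + 2 f₂(x)·π₂(x) − f₁(x) − f₂(x)] dx. -/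
/-!
Disintegrate the joint law `ρ` along its first coordinate: the kernel `a ↦ (condCDF ρ a).measure`
reproduces `ρ` from its first marginal, so `E[X₁ · s(X₁, X₂)] = ∫ a (2 condCDF ρ a a - 1) dρ₁(a)`
with `s(a, b) = 1` for `b ≤ a` and `-1` otherwise. Because `ρ ≪ Lebesgue`, ties `X₁ = X₂` are
negligible, and then `|X₁ - X₂| = X₁ s(X₁, X₂) + X₂ s(X₂, X₁)`. The second term is the first one
for the swapped law, and replacing the marginals by their densities gives the formula.
-/

open MeasureTheory ProbabilityTheory Real
open Set

section WithDensity

variable {α : Type*} [MeasurableSpace α] {μ : Measure α} {f : α → ℝ}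

lemma integral_withDensity_ofReal (hf : Measurable f) (hf0 : ∀ᵐ x ∂μ, 0 ≤ f x) (g : α → ℝ) :
    ∫ x, g x ∂μ.withDensity (fun x => ENNReal.ofReal (f x)) = ∫ x, f x * g x ∂μ := by
  rw [integral_withDensity_eq_integral_toReal_smul hf.ennreal_ofReal
    (ae_of_all _ fun _ => ENNReal.ofReal_lt_top)]
  refine integral_congr_ae (hf0.mono fun x hx => ?_)
  simp only [ENNReal.toReal_ofReal hx, smul_eq_mul]

lemma integrable_withDensity_ofReal_iff (hf : Measurable f) (hf0 : ∀ᵐ x ∂μ, 0 ≤ f x)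
    {g : α → ℝ} :
    Integrable g (μ.withDensity fun x => ENNReal.ofReal (f x))
      ↔ Integrable (fun x => f x * g x) μ := by
  rw [integrable_withDensity_iff_integrable_smul' hf.ennreal_ofReal
    (ae_of_all _ fun _ => ENNReal.ofReal_lt_top)]
  refine integrable_congr (hf0.mono fun x hx => ?_)
  simp only [ENNReal.toReal_ofReal hx, smul_eq_mul]

end WithDensity

lemma ae_fst_ne_snd_of_absolutelyContinuous {ρ : Measure (ℝ × ℝ)} (hac : ρ ≪ volume) :
    ∀ᵐ p ∂ρ, p.1 ≠ p.2 := by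
  have hne : MeasurableSet {p : ℝ × ℝ | p.1 ≠ p.2} :=
    (measurableSet_eq_fun measurable_fst measurable_snd).compl
  have hvol : ∀ᵐ p ∂(volume : Measure (ℝ × ℝ)), p.1 ≠ p.2 := by
    rw [Measure.volume_eq_prod, Measure.ae_prod_iff_ae_ae hne]
    exact ae_of_all _ fun x => (volume.ae_ne x).mono fun _ hy => hy.symm
  exact hac.ae_le hvol

lemma integral_ite_le_one_neg_one (ν : Measure ℝ) [IsProbabilityMeasure ν] (x : ℝ) :
    ∫ y, (if y ≤ x then 1 else -1 : ℝ) ∂ν = 2 * ν.real (Iic x) - 1 := by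
  have h : (fun y => (if y ≤ x then 1 else -1 : ℝ))
      = fun y => (Iic x).indicator (fun _ => 2) y - 1 := by
    ext y
    by_cases hy : y ≤ x <;> norm_num [hy]
  rw [h, integral_sub ((integrable_const _).indicator measurableSet_Iic) (integrable_const _),
    integral_indicator_const _ measurableSet_Iic]
  simp [mul_comm]

namespace ProbabilityTheory

variable {α : Type*} [MeasurableSpace α]

noncomputable def condCDFKernel (ρ : Measure (α × ℝ)) : Kernel α ℝ :=
  ⟨fun a => (condCDF ρ a).measure, measurable_measure_condCDF ρ⟩

lemma condCDFKernel_apply (ρ : Measure (α × ℝ)) (a : α) :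
    condCDFKernel ρ a = (condCDF ρ a).measure := rfl

instance isMarkovKernel_condCDFKernel (ρ : Measure (α × ℝ)) :
    IsMarkovKernel (condCDFKernel ρ) :=
  ⟨fun a => by rw [condCDFKernel_apply]; infer_instance⟩

lemma condCDF_eq_condCDFKernel_real_Iic (ρ : Measure (α × ℝ)) (a : α) (x : ℝ) :
    condCDF ρ a x = (condCDFKernel ρ a).real (Iic x) := by
  rw [measureReal_def, condCDFKernel_apply, measure_condCDF_Iic,
    ENNReal.toReal_ofReal (condCDF_nonneg ρ a x)]

lemma fst_compProd_condCDFKernel (ρ : Measure (α × ℝ)) [IsFiniteMeasure ρ] :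
    ρ.fst ⊗ₘ condCDFKernel ρ = ρ := by
  ext s hs
  have h := congr_arg (fun κ => κ () s) (compProd_toKernel (isCondKernelCDF_condCDF ρ))
  simp only [Kernel.compProd_apply hs, Kernel.const_apply] at h
  rw [Measure.compProd_apply hs, ← h]
  rfl

lemma _root_.Measurable.condCDF (ρ : Measure (α × ℝ)) {g : α → ℝ} (hg : Measurable g) :
    Measurable fun a => condCDF ρ a (g a) := by
  simp_rw [condCDF_eq_condCDFKernel_real_Iic, measureReal_def]
  exact (Kernel.measurable_kernel_prodMk_left
    (measurableSet_le measurable_snd (hg.comp measurable_fst))).ennreal_toReal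

lemma integrable_mul_two_mul_condCDF_sub_one (ρ : Measure (α × ℝ)) {μ : Measure α}
    {g : α → ℝ} (hg : Measurable g) {h : α → ℝ} (hh : Integrable h μ) :
    Integrable (fun a => h a * (2 * condCDF ρ a (g a) - 1)) μ := by
  refine hh.mul_bdd (c := 1) ((hg.condCDF ρ).const_mul 2 |>.sub_const 1).aestronglyMeasurable
    (ae_of_all _ fun a => ?_)
  have h0 := condCDF_nonneg ρ a (g a)
  have h1 := condCDF_le_one ρ a (g a)
  rw [Real.norm_eq_abs, abs_le]
  constructor <;> linarith

lemma integrable_mul_ite_snd_le (ρ : Measure (α × ℝ)) {g : α → ℝ} (hg : Measurable g)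
    {h : α → ℝ} (hh : Integrable (fun p => h p.1) ρ) :
    Integrable (fun p => h p.1 * (if p.2 ≤ g p.1 then 1 else -1 : ℝ)) ρ := by
  refine hh.mul_bdd (c := 1) ?_ (ae_of_all _ fun p => ?_)
  · exact (Measurable.ite (measurableSet_le measurable_snd (hg.comp measurable_fst))
      measurable_const measurable_const).aestronglyMeasurable
  · split_ifs <;> simp

lemma integral_mul_ite_snd_le (ρ : Measure (α × ℝ)) [IsFiniteMeasure ρ] {g : α → ℝ}
    (hg : Measurable g) {h : α → ℝ} (hh : Integrable (fun p => h p.1) ρ) :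
    ∫ p, h p.1 * (if p.2 ≤ g p.1 then 1 else -1) ∂ρ
      = ∫ a, h a * (2 * condCDF ρ a (g a) - 1) ∂ρ.fst := by
  have hint := integrable_mul_ite_snd_le ρ hg hh
  rw [← fst_compProd_condCDFKernel ρ] at hint
  conv_lhs => rw [← fst_compProd_condCDFKernel ρ]
  rw [Measure.integral_compProd hint]
  refine integral_congr_ae (ae_of_all _ fun a => ?_)
  dsimp only
  rw [integral_const_mul, integral_ite_le_one_neg_one, condCDF_eq_condCDFKernel_real_Iic]

lemma integral_abs_fst_sub_snd_eq (ρ : Measure (ℝ × ℝ)) [IsFiniteMeasure ρ] (hac : ρ ≪ volume)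
    (h₁ : Integrable (fun p => p.1) ρ) (h₂ : Integrable (fun p => p.2) ρ) :
    ∫ p, |p.1 - p.2| ∂ρ = ∫ a, a * (2 * condCDF ρ a a - 1) ∂ρ.fst
      + ∫ a, a * (2 * condCDF (ρ.map Prod.swap) a a - 1) ∂ρ.snd := by
  have hsplit : ∀ᵐ p ∂ρ, |p.1 - p.2| = p.1 * (if p.2 ≤ p.1 then 1 else -1)
      + p.2 * (if p.1 ≤ p.2 then 1 else -1) := by
    filter_upwards [ae_fst_ne_snd_of_absolutelyContinuous hac] with p hp
    rcases hp.lt_or_gt with h | h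
    · rw [abs_of_neg (sub_neg.2 h), if_neg (not_le.2 h), if_pos h.le]; ring
    · rw [abs_of_pos (sub_pos.2 h), if_pos h.le, if_neg (not_le.2 h)]; ring
  have hint : ∀ σ : Measure (ℝ × ℝ), Integrable (fun p => p.1) σ →
      Integrable (fun p => p.1 * (if p.2 ≤ p.1 then 1 else -1 : ℝ)) σ :=
    fun σ h => integrable_mul_ite_snd_le σ measurable_id (h := id) h
  have key : ∀ σ : Measure (ℝ × ℝ), [IsFiniteMeasure σ] → Integrable (fun p => p.1) σ →
      ∫ p, p.1 * (if p.2 ≤ p.1 then 1 else -1 : ℝ) ∂σ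
        = ∫ a, a * (2 * condCDF σ a a - 1) ∂σ.fst :=
    fun σ _ h => integral_mul_ite_snd_le σ measurable_id (h := id) h
  have h₁' : Integrable (fun p => p.1) (ρ.map Prod.swap) :=
    (integrable_map_measure measurable_fst.aestronglyMeasurable
      measurable_swap.aemeasurable).2 h₂
  have hint' : Integrable (fun p => p.2 * (if p.1 ≤ p.2 then 1 else -1 : ℝ)) ρ :=
    (hint _ h₁').comp_measurable measurable_swap
  have hswap : ∫ p, p.2 * (if p.1 ≤ p.2 then 1 else -1 : ℝ) ∂ρ
      = ∫ p, p.1 * (if p.2 ≤ p.1 then 1 else -1 : ℝ) ∂(ρ.map Prod.swap) :=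
    (integral_map measurable_swap.aemeasurable (hint _ h₁').1).symm
  rw [integral_congr_ae hsplit, integral_add (hint ρ h₁) hint', hswap, key ρ h₁, key _ h₁',
    Measure.fst_map_swap]

end ProbabilityTheory

theorem abs_diff_expectation_eq_integral_density_general
    {Ω : Type*} [MeasurableSpace Ω] (P : Measure Ω) [IsProbabilityMeasure P]
    (X₁ X₂ : Ω → ℝ) (hm₁ : Measurable X₁) (hm₂ : Measurable X₂)
    (hi₁ : Integrable X₁ P) (hi₂ : Integrable X₂ P)
    (hac : P.map (fun ω => (X₁ ω, X₂ ω)) ≪ (volume : Measure (ℝ × ℝ)))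
    (f₁ f₂ : ℝ → ℝ)
    (hf₁meas : Measurable f₁) (hf₂meas : Measurable f₂)
    (hf₁nonneg : ∀ x, 0 ≤ f₁ x) (hf₂nonneg : ∀ x, 0 ≤ f₂ x)
    (hf₁ : P.map X₁ = volume.withDensity fun x => ENNReal.ofReal (f₁ x))
    (hf₂ : P.map X₂ = volume.withDensity fun x => ENNReal.ofReal (f₂ x)) :
    ∫ ω, |X₁ ω - X₂ ω| ∂P
      = ∫ x, x * (2 * f₁ x * condCDF (P.map (fun ω => (X₁ ω, X₂ ω))) x x
          + 2 * f₂ x * condCDF ((P.map (fun ω => (X₁ ω, X₂ ω))).map Prod.swap) x x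
          - f₁ x - f₂ x) := by
  have hpair : Measurable fun ω => (X₁ ω, X₂ ω) := hm₁.prodMk hm₂
  set ρ := P.map fun ω => (X₁ ω, X₂ ω)
  have h₁ : Integrable (fun p => p.1) ρ :=
    (integrable_map_measure measurable_fst.aestronglyMeasurable hpair.aemeasurable).2 hi₁
  have h₂ : Integrable (fun p => p.2) ρ :=
    (integrable_map_measure measurable_snd.aestronglyMeasurable hpair.aemeasurable).2 hi₂
  have hF₁ : Integrable (fun x => x * (2 * condCDF ρ x x - 1)) (P.map X₁) :=
    integrable_mul_two_mul_condCDF_sub_one ρ measurable_id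
      ((integrable_map_measure aestronglyMeasurable_id hm₁.aemeasurable).2 hi₁)
  have hF₂ : Integrable (fun x => x * (2 * condCDF (ρ.map Prod.swap) x x - 1)) (P.map X₂) :=
    integrable_mul_two_mul_condCDF_sub_one (ρ.map Prod.swap) measurable_id
      ((integrable_map_measure aestronglyMeasurable_id hm₂.aemeasurable).2 hi₂)
  rw [hf₁, integrable_withDensity_ofReal_iff hf₁meas (ae_of_all _ hf₁nonneg)] at hF₁
  rw [hf₂, integrable_withDensity_ofReal_iff hf₂meas (ae_of_all _ hf₂nonneg)] at hF₂
  calc ∫ ω, |X₁ ω - X₂ ω| ∂P = ∫ p, |p.1 - p.2| ∂ρ :=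
        (integral_map hpair.aemeasurable
          (measurable_fst.sub measurable_snd).abs.aestronglyMeasurable).symm
    _ = ∫ a, a * (2 * condCDF ρ a a - 1) ∂ρ.fst
          + ∫ a, a * (2 * condCDF (ρ.map Prod.swap) a a - 1) ∂ρ.snd :=
        integral_abs_fst_sub_snd_eq ρ hac h₁ h₂
    _ = (∫ x, f₁ x * (x * (2 * condCDF ρ x x - 1)))
          + ∫ x, f₂ x * (x * (2 * condCDF (ρ.map Prod.swap) x x - 1)) := by
        rw [Measure.fst_map_prodMk hm₂, Measure.snd_map_prodMk hm₁, hf₁, hf₂,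
          integral_withDensity_ofReal hf₁meas (ae_of_all _ hf₁nonneg),
          integral_withDensity_ofReal hf₂meas (ae_of_all _ hf₂nonneg)]
    _ = _ := by
        rw [← integral_add hF₁ hF₂]
        congr 1 with x
        ring

/-- If `(X₁, X₂)` has an absolutely continuous joint law `ρ` with marginal densities `f₁, f₂`,
and `π₁(x) = condCDF ρ x x`, `π₂(x) = condCDF ρ' x x` (with `ρ'` the swap pushforward of `ρ`),
then `E|X₁ − X₂| = ∫ x (2 f₁(x) π₁(x) + 2 f₂(x) π₂(x) − f₁(x) − f₂(x)) dx`. -/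
theorem abs_diff_expectation_eq_integral_density
    {Ω : Type*} [MeasurableSpace Ω] (P : Measure Ω) [IsProbabilityMeasure P]
    (X₁ X₂ : Ω → ℝ) (hm₁ : Measurable X₁) (hm₂ : Measurable X₂)
    (hi₁ : Integrable X₁ P) (hi₂ : Integrable X₂ P)
    (hdiff : Integrable (fun ω => |X₁ ω - X₂ ω|) P)
    (hac : P.map (fun ω => (X₁ ω, X₂ ω)) ≪ (volume : Measure (ℝ × ℝ)))
    (f₁ f₂ : ℝ → ℝ)
    (hf₁meas : Measurable f₁) (hf₂meas : Measurable f₂)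
    (hf₁nonneg : ∀ x, 0 ≤ f₁ x) (hf₂nonneg : ∀ x, 0 ≤ f₂ x)
    (hf₁ : P.map X₁ = volume.withDensity fun x => ENNReal.ofReal (f₁ x))
    (hf₂ : P.map X₂ = volume.withDensity fun x => ENNReal.ofReal (f₂ x)) :
    ∫ ω, |X₁ ω - X₂ ω| ∂P
      = ∫ x, x * (2 * f₁ x * condCDF (P.map (fun ω => (X₁ ω, X₂ ω))) x x
          + 2 * f₂ x * condCDF ((P.map (fun ω => (X₁ ω, X₂ ω))).map Prod.swap) x x
          - f₁ x - f₂ x) :=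
  abs_diff_expectation_eq_integral_density_general P X₁ X₂ hm₁ hm₂ hi₁ hi₂ hac f₁ f₂ hf₁meas hf₂meas
    hf₁nonneg hf₂nonneg hf₁ hf₂
end

section
/- Let n ≥ 2, let Z₀, Z₁, …, Zₙ be independent standard normal random variables (each with law gaussianReal 0 1) on a common probability space, let μ ∈ ℝ, σ > 0 and ρ ∈ [0, 1], and define Xᵢ = μ + σ·(√ρ·Z₀ + √(1 − ρ)·Zᵢ) for i = 1,…,n (an exchangeable multivariate normal vector with common mean μ, common variance σ², and common pairwise correlation ρ). Then the Gini mean difference satisfies GMDₙ = (2/√π)·σ·√(1 − ρ). -/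
/-!
For `i ≠ j` the common factor `√ρ Z₀` cancels, so `Xᵢ - Xⱼ = σ √(1 - ρ) (Zᵢ - Zⱼ)`, and
`Zᵢ - Zⱼ` is a centred Gaussian of variance `2`. Its mean absolute value is
`√(2 · 2 / π) = 2 / √π`, the same for every pair, so averaging over the `C(n, 2)` pairs changes
nothing.
-/

open MeasureTheory ProbabilityTheory Real Finset
open scoped NNReal

theorem sum_sum_ite_lt_const {M : Type*} [AddCommMonoid M] (n : ℕ) (c : M) :
    ∑ i : Fin n, ∑ j : Fin n, (if i < j then c else 0) = n.choose 2 • c := by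
  induction n with
  | zero => simp
  | succ n ih =>
    simp only [Fin.sum_univ_succ (n := n), Fin.succ_lt_succ_iff, Fin.succ_pos, ite_true,
      ite_false, Fin.not_lt_zero, sum_const, card_univ, Fintype.card_fin]
    simp [ih, Nat.choose_succ_succ, add_smul]

theorem one_div_choose_two_mul_sum_ite_lt_eq {n : ℕ} (hn : 2 ≤ n) {f : Fin n → Fin n → ℝ}
    {c : ℝ} (hf : ∀ i j, i < j → f i j = c) :
    (1 / (n.choose 2 : ℝ)) * ∑ i : Fin n, ∑ j : Fin n, (if i < j then f i j else 0) = c := by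
  have hchoose : (n.choose 2 : ℝ) ≠ 0 := by exact_mod_cast (Nat.choose_pos hn).ne'
  have hsum : ∑ i : Fin n, ∑ j : Fin n, (if i < j then f i j else 0)
      = ∑ i : Fin n, ∑ j : Fin n, (if i < j then c else 0) :=
    sum_congr rfl fun i _ => sum_congr rfl fun j _ => ite_congr rfl (hf i j) fun _ => rfl
  rw [hsum, sum_sum_ite_lt_const, nsmul_eq_mul]
  field_simp

theorem integral_abs_gaussianReal (v : ℝ≥0) :
    ∫ x, |x| ∂gaussianReal 0 v = √(2 * v / π) := by
  rcases eq_or_ne v 0 with rfl | hv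
  · simp [gaussianReal_zero_var]
  have hv' : (0 : ℝ) < v := by positivity
  have half_line : ∫ x in Set.Ioi (0 : ℝ), x * exp (-(2 * (v : ℝ))⁻¹ * x ^ 2) = v := by
    have := integral_rpow_mul_exp_neg_mul_rpow (p := 2) (q := 1) (b := (2 * (v : ℝ))⁻¹)
      two_pos (by norm_num) (by positivity)
    simp only [rpow_one, rpow_two] at this
    rw [this]
    norm_num [rpow_neg_one]
    field_simp
  calc ∫ x, |x| ∂gaussianReal 0 v
      = (√(2 * π * v))⁻¹ * ∫ x, |x| * exp (-(2 * (v : ℝ))⁻¹ * |x| ^ 2) := by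
        rw [integral_gaussianReal_eq_integral_smul hv, ← integral_const_mul]
        congr 1 with x
        simp only [gaussianPDFReal, smul_eq_mul, sub_zero, sq_abs]
        ring_nf
    _ = (√(2 * π * v))⁻¹ * (2 * v) := by
        rw [integral_comp_abs (f := fun x => x * exp (-(2 * (v : ℝ))⁻¹ * x ^ 2)), half_line]
    _ = √(2 * v / π) := by
        rw [show 2 * (v : ℝ) / π = (2 * v) ^ 2 / (2 * π * v) by field_simp,
          sqrt_div' _ (by positivity), sqrt_sq (by positivity), inv_mul_eq_div]

section IndepGaussian

variable {Ω : Type*} {mΩ : MeasurableSpace Ω} {P : Measure Ω} {X Y : Ω → ℝ}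

theorem gaussianReal_sub_gaussianReal_of_indepFun {m₁ m₂ : ℝ} {v₁ v₂ : ℝ≥0}
    (hXY : IndepFun X Y P) (hX : P.map X = gaussianReal m₁ v₁)
    (hY : P.map Y = gaussianReal m₂ v₂) :
    P.map (X - Y) = gaussianReal (m₁ - m₂) (v₁ + v₂) := by
  have hY_meas : AEMeasurable Y P := .of_map_ne_zero (by simp [hY, NeZero.ne])
  have hnegY : P.map (-Y) = gaussianReal (-m₂) v₂ := by
    rw [show -Y = (fun y => -y) ∘ Y from rfl, ← AEMeasurable.map_map_of_aemeasurable
      measurable_neg.aemeasurable hY_meas, hY, gaussianReal_map_neg]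
  rw [sub_eq_add_neg, sub_eq_add_neg]
  exact gaussianReal_add_gaussianReal_of_indepFun (hXY.comp measurable_id measurable_neg) hX hnegY

theorem integral_abs_sub_of_indepFun_gaussianReal {m : ℝ} {v₁ v₂ : ℝ≥0}
    (hXY : IndepFun X Y P) (hX : P.map X = gaussianReal m v₁)
    (hY : P.map Y = gaussianReal m v₂) :
    ∫ ω, |X ω - Y ω| ∂P = √(2 * (v₁ + v₂) / π) := by
  have hlaw := gaussianReal_sub_gaussianReal_of_indepFun hXY hX hY
  rw [sub_self] at hlaw
  have hmeas : AEMeasurable (X - Y) P := .of_map_ne_zero (by simp [hlaw, NeZero.ne])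
  rw [← NNReal.coe_add, ← integral_abs_gaussianReal, ← hlaw,
    integral_map hmeas continuous_abs.aestronglyMeasurable]
  rfl

end IndepGaussian

theorem gmd_exchangeable_normal_general
    {Ω : Type*} [MeasurableSpace Ω] (P : Measure Ω)
    (n : ℕ) (hn : 2 ≤ n)
    (Z : Fin (n + 1) → Ω → ℝ)
    (hZ : ∀ k, P.map (Z k) = gaussianReal 0 1)
    (hind : iIndepFun Z P)
    (μ σ ρ : ℝ) (hσ : 0 < σ)
    (X : Fin n → Ω → ℝ)
    (hX : ∀ i ω, X i ω
      = μ + σ * (Real.sqrt ρ * Z 0 ω + Real.sqrt (1 - ρ) * Z i.succ ω)) :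
    (1 / (n.choose 2 : ℝ)) *
        ∑ i : Fin n, ∑ j : Fin n, (if i < j then ∫ ω, |X i ω - X j ω| ∂P else 0)
      = (2 / Real.sqrt Real.pi) * σ * Real.sqrt (1 - ρ) := by
  refine one_div_choose_two_mul_sum_ite_lt_eq hn fun i j hij => ?_
  have hdiff : ∀ ω, |X i ω - X j ω| = σ * √(1 - ρ) * |Z i.succ ω - Z j.succ ω| := by
    intro ω
    rw [hX, hX, ← abs_of_nonneg (by positivity : 0 ≤ σ * √(1 - ρ)), ← abs_mul]
    congr 1
    ring
  have hZZ : ∫ ω, |Z i.succ ω - Z j.succ ω| ∂P = 2 / √π := by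
    rw [integral_abs_sub_of_indepFun_gaussianReal
      (hind.indepFun (Fin.succ_injective _ |>.ne hij.ne)) (hZ _) (hZ _),
      show (2 : ℝ) * ((1 : ℝ≥0) + (1 : ℝ≥0)) = 2 ^ 2 by norm_num, sqrt_div' _ pi_pos.le,
      sqrt_sq zero_le_two]
  simp_rw [hdiff]
  rw [integral_const_mul, hZZ]
  ring

/-- For an exchangeable multivariate normal vector `Xᵢ = μ + σ(√ρ Z₀ + √(1−ρ) Zᵢ)` built from
independent standard normals `Z₀, Z₁, …, Zₙ`, the Gini mean difference is
`GMDₙ = (2/√π) σ √(1 − ρ)`. -/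
theorem gmd_exchangeable_normal
    {Ω : Type*} [MeasurableSpace Ω] (P : Measure Ω) [IsProbabilityMeasure P]
    (n : ℕ) (hn : 2 ≤ n)
    (Z : Fin (n + 1) → Ω → ℝ) (hmeas : ∀ k, Measurable (Z k))
    (hZ : ∀ k, P.map (Z k) = gaussianReal 0 1)
    (hind : iIndepFun Z P)
    (μ σ ρ : ℝ) (hσ : 0 < σ) (hρ : ρ ∈ Set.Icc (0 : ℝ) 1)
    (X : Fin n → Ω → ℝ)
    (hX : ∀ i ω, X i ω
      = μ + σ * (Real.sqrt ρ * Z 0 ω + Real.sqrt (1 - ρ) * Z i.succ ω)) :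
    (1 / (n.choose 2 : ℝ)) *
        ∑ i : Fin n, ∑ j : Fin n, (if i < j then ∫ ω, |X i ω - X j ω| ∂P else 0)
      = (2 / Real.sqrt Real.pi) * σ * Real.sqrt (1 - ρ) :=
  gmd_exchangeable_normal_general P n hn Z hZ hind μ σ ρ hσ X hX
end
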